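/- For any nonnegative matrix A ∈ ℝ^{m×n} with s = ∑_{ij} A_{ij}, the capacity satisfies cap(A) ≥ s − mn·√(Δ(A)/2). -/

import Mathlib

open Matrix BigOperators

/-- Capacity of a nonnegative matrix. -/
noncomputable def matCap {ι κ : Type*} [Fintype ι] [Fintype κ] (A : Matrix ι κ ℝ) : ℝ :=
  sInf {c : ℝ | ∃ x : κ → ℝ, (∀ j, 0 < x j) ∧
    c = (Fintype.card ι : ℝ) * (∏ i, A.mulVec x i) ^ ((1 : ℝ) / (Fintype.card ι : ℝ)) /
        (∏ j, x j) ^ ((1 : ℝ) / (Fintype.card κ : ℝ))}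

/-- Size of a matrix: the sum of all entries. -/
noncomputable def matSize {ι κ : Type*} [Fintype ι] [Fintype κ] (A : Matrix ι κ ℝ) : ℝ :=
  ∑ i, ∑ j, A i j

/-- The measure Δ of distance to doubly balanced. -/
noncomputable def matDelta {ι κ : Type*} [Fintype ι] [Fintype κ] (A : Matrix ι κ ℝ) : ℝ :=
  (1 / (Fintype.card ι : ℝ)) * ∑ i, (matSize A - (Fintype.card ι : ℝ) * ∑ j, A i j) ^ 2 +
  (1 / (Fintype.card κ : ℝ)) * ∑ j, (matSize A - (Fintype.card κ : ℝ) * ∑ i, A i j) ^ 2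

/-
Let `t = s - m n √(Δ/2) > 0`. Cauchy–Schwarz bounds the deviation of the row and column sums from
their means over any set of rows or columns, and since `m n (|S|/m + |T|/n - 1)` is an integer this
gives the cut condition `|S| t/m ≤ A(S, T) + |Tᶜ| t/n` for all row sets `S` and column sets `T`.
By the supply–demand theorem there is then `0 ≤ B ≤ A` with all row sums `t/m` and all column sums
`t/n`: if not, Hahn–Banach separates the margins `(t/m, t/n)` from the compact convex set of
margins of `[0, A]` by some `(u, v)`, and integrating the cut conditions for the level sets
`{u ≥ l}`, `{-v < l}` over `l` contradicts the separation. Finally, weighted AM–GM on the rows of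
the row-stochastic matrix `(m/t) B` gives `∏ (A x)_i ≥ (t/m)^m (∏ x_j)^(m/n)`, i.e. `cap A ≥ t`.
-/

open Finset Set MeasureTheory

theorem intervalIntegral_indicator_Iic_one {a b p : ℝ} (hap : a ≤ p) (hpb : p ≤ b) :
    ∫ l in a..b, (Iic p).indicator 1 l = p - a := by
  rw [intervalIntegral.integral_of_le (hap.trans hpb), integral_indicator measurableSet_Iic,
    Measure.restrict_restrict measurableSet_Iic, Iic_inter_Ioc_of_le hpb]
  simp [hap]

theorem intervalIntegrable_indicator_Iic_one (p a b : ℝ) :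
    IntervalIntegrable ((Iic p).indicator (1 : ℝ → ℝ)) volume a b :=
  Antitone.intervalIntegrable fun x y hxy => by
    by_cases hy : y ≤ p
    · simp [indicator_of_mem (show x ∈ Iic p from hxy.trans hy), hy]
    · simp [indicator_of_notMem (show y ∉ Iic p from hy), indicator_nonneg]

section StepFunction

variable {K : Type*} [Fintype K] (c p : K → ℝ)

theorem intervalIntegrable_sum_mul_indicator_Iic (a b : ℝ) :
    IntervalIntegrable (fun l => ∑ k, c k * (Iic (p k)).indicator 1 l) volume a b := by
  simpa only [Finset.sum_fn] using IntervalIntegrable.sum univ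
    fun k _ => (intervalIntegrable_indicator_Iic_one (p k) a b).const_mul (c k)

theorem intervalIntegral_sum_mul_indicator_Iic {a b : ℝ} (hp : ∀ k, p k ∈ Icc a b) :
    ∫ l in a..b, ∑ k, c k * (Iic (p k)).indicator 1 l = ∑ k, c k * (p k - a) := by
  rw [intervalIntegral.integral_finsetSum fun k _ =>
    (intervalIntegrable_indicator_Iic_one (p k) a b).const_mul (c k)]
  refine Finset.sum_congr rfl fun k _ => ?_
  rw [intervalIntegral.integral_const_mul,
    intervalIntegral_indicator_Iic_one (hp k).1 (hp k).2]

end StepFunction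

@[simps]
noncomputable def margins (ι κ : Type*) [Fintype ι] [Fintype κ] :
    (ι → κ → ℝ) →ₗ[ℝ] (ι ⊕ κ → ℝ) where
  toFun B := Sum.elim (fun i => ∑ j, B i j) fun j => ∑ i, B i j
  map_add' B C := by ext (i | j) <;> simp [sum_add_distrib]
  map_smul' r B := by ext (i | j) <;> simp [mul_sum]

section Transport

variable {ι κ : Type*} [Fintype ι] [Fintype κ] [DecidableEq κ]

theorem sum_mul_indicator_sub_le_of_cut {A : Matrix ι κ ℝ} {a : ι → ℝ} {b : κ → ℝ}
    (hcut : ∀ (S : Finset ι) (T : Finset κ),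
      ∑ i ∈ S, a i ≤ ∑ i ∈ S, ∑ j ∈ T, A i j + ∑ j ∈ Tᶜ, b j)
    (u : ι → ℝ) (v : κ → ℝ) (l : ℝ) :
    ∑ i, a i * (Iic (u i)).indicator 1 l - ∑ j, b j * (Iic (-v j)).indicator 1 l ≤
      ∑ x : ι × κ, A x.1 x.2 * (Iic (u x.1)).indicator 1 l -
        ∑ x : ι × κ, A x.1 x.2 * (Iic (u x.1 ⊓ -v x.2)).indicator 1 l := by
  set S := univ.filter fun i => l ≤ u i
  set T := (univ.filter fun j => l ≤ -v j)ᶜ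
  have hS : ∑ i, a i * (Iic (u i)).indicator 1 l = ∑ i ∈ S, a i := by
    simp [S, sum_filter, indicator_apply]
  have hT : ∑ j, b j * (Iic (-v j)).indicator 1 l = ∑ j ∈ Tᶜ, b j := by
    simp [T, sum_filter, indicator_apply]
  have hST : ∑ x : ι × κ, A x.1 x.2 * (Iic (u x.1)).indicator 1 l -
      ∑ x : ι × κ, A x.1 x.2 * (Iic (u x.1 ⊓ -v x.2)).indicator 1 l =
        ∑ i ∈ S, ∑ j ∈ T, A i j := by
    rw [← sum_sub_distrib, Fintype.sum_prod_type, sum_filter]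
    refine Finset.sum_congr rfl fun i _ => ?_
    by_cases hi : l ≤ u i
    · simp only [T, hi, if_true, Finset.compl_filter, sum_filter]
      refine Finset.sum_congr rfl fun j _ => ?_
      by_cases hj : l ≤ -v j <;> simp [hi, hj]
    · simp [hi]
  linarith [hcut S T]

theorem sum_mul_add_sum_mul_le_of_cut {A : Matrix ι κ ℝ} {a : ι → ℝ} {b : κ → ℝ}
    (hab : ∑ i, a i = ∑ j, b j)
    (hcut : ∀ (S : Finset ι) (T : Finset κ),
      ∑ i ∈ S, a i ≤ ∑ i ∈ S, ∑ j ∈ T, A i j + ∑ j ∈ Tᶜ, b j)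
    (u : ι → ℝ) (v : κ → ℝ) :
    ∑ i, a i * u i + ∑ j, b j * v j ≤ ∑ i, ∑ j, A i j * max (u i + v j) 0 := by
  set M := ∑ k : ι ⊕ κ, |Sum.elim u v k|
  have hM : ∀ k, |Sum.elim u v k| ≤ M := fun k =>
    single_le_sum (fun k _ => abs_nonneg (Sum.elim u v k)) (mem_univ k)
  have hu : ∀ i, u i ∈ Icc (-M) M := fun i => abs_le.1 (hM (.inl i))
  have hv : ∀ j, -v j ∈ Icc (-M) M := fun j => abs_le.1 ((abs_neg (v j)).trans_le (hM (.inr j)))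
  have huv : ∀ x : ι × κ, u x.1 ⊓ -v x.2 ∈ Icc (-M) M := fun x =>
    ⟨le_inf (hu x.1).1 (hv x.2).1, inf_le_left.trans (hu x.1).2⟩
  have hint := intervalIntegral.integral_mono_on (neg_le_self (by positivity : 0 ≤ M))
    ((intervalIntegrable_sum_mul_indicator_Iic _ _ _ _).sub
      (intervalIntegrable_sum_mul_indicator_Iic _ _ _ _))
    ((intervalIntegrable_sum_mul_indicator_Iic _ _ _ _).sub
      (intervalIntegrable_sum_mul_indicator_Iic _ _ _ _))
    fun l _ => sum_mul_indicator_sub_le_of_cut hcut u v l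
  rw [intervalIntegral.integral_sub (intervalIntegrable_sum_mul_indicator_Iic _ _ _ _)
      (intervalIntegrable_sum_mul_indicator_Iic _ _ _ _),
    intervalIntegral.integral_sub (intervalIntegrable_sum_mul_indicator_Iic _ _ _ _)
      (intervalIntegrable_sum_mul_indicator_Iic _ _ _ _),
    intervalIntegral_sum_mul_indicator_Iic _ _ hu, intervalIntegral_sum_mul_indicator_Iic _ _ hv,
    intervalIntegral_sum_mul_indicator_Iic (fun x : ι × κ => A x.1 x.2) (fun x => u x.1)
      fun x => hu x.1,
    intervalIntegral_sum_mul_indicator_Iic (fun x : ι × κ => A x.1 x.2) _ huv,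
    ← sum_sub_distrib (f := fun x : ι × κ => _), Fintype.sum_prod_type] at hint
  calc ∑ i, a i * u i + ∑ j, b j * v j
      = ∑ i, a i * (u i - -M) - ∑ j, b j * (-v j - -M) := by
        simp only [mul_sub, mul_neg, sum_sub_distrib, sum_neg_distrib, ← sum_mul, hab]
        ring
    _ ≤ _ := hint
    _ = ∑ i, ∑ j, A i j * max (u i + v j) 0 := by
        refine Finset.sum_congr rfl fun i _ => Finset.sum_congr rfl fun j _ => ?_
        rw [← mul_sub]
        congr 1
        rcases le_total (u i) (-v j) with h | h
        · rw [inf_eq_left.2 h, max_eq_right (by linarith)]; ring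
        · rw [inf_eq_right.2 h, max_eq_left (by linarith)]; ring

theorem exists_transport_of_cut {A : Matrix ι κ ℝ} (hA : ∀ i j, 0 ≤ A i j) {a : ι → ℝ}
    {b : κ → ℝ} (hab : ∑ i, a i = ∑ j, b j)
    (hcut : ∀ (S : Finset ι) (T : Finset κ),
      ∑ i ∈ S, a i ≤ ∑ i ∈ S, ∑ j ∈ T, A i j + ∑ j ∈ Tᶜ, b j) :
    ∃ B : Matrix ι κ ℝ, (∀ i j, 0 ≤ B i j ∧ B i j ≤ A i j) ∧ (∀ i, ∑ j, B i j = a i) ∧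
      ∀ j, ∑ i, B i j = b j := by
  classical
  by_contra hne
  have hnot : Sum.elim a b ∉ margins ι κ '' Icc (0 : ι → κ → ℝ) A := by
    rintro ⟨B, ⟨hB0, hBA⟩, hB⟩
    exact hne ⟨B, fun i j => ⟨hB0 i j, hBA i j⟩, fun i => congrFun hB (.inl i),
      fun j => congrFun hB (.inr j)⟩
  obtain ⟨f, c, hlt, hgt⟩ := geometric_hahn_banach_closed_point
    ((convex_Icc (0 : ι → κ → ℝ) A).linear_image (margins ι κ))
    (isCompact_Icc.image (margins ι κ).continuous_of_finiteDimensional).isClosed hnot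
  set w : ι ⊕ κ → ℝ := fun k => f fun k' => if k = k' then 1 else 0
  have hf : ∀ z, f z = ∑ i, z (.inl i) * w (.inl i) + ∑ j, z (.inr j) * w (.inr j) := fun z => by
    rw [← Fintype.sum_sum_type fun k => z k * w k]
    exact (f : (ι ⊕ κ → ℝ) →ₗ[ℝ] ℝ).pi_apply_eq_sum_univ z
  set u := fun i => w (.inl i)
  set v := fun j => w (.inr j)
  set B : ι → κ → ℝ := fun i j => if 0 ≤ u i + v j then A i j else 0
  have hB : B ∈ Icc (0 : ι → κ → ℝ) A := by
    constructor <;> intro i j <;> dsimp only [B] <;> split_ifs <;> first | exact hA i j | rfl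
  have hfB : f (margins ι κ B) = ∑ i, ∑ j, A i j * max (u i + v j) 0 := by
    rw [hf]
    simp only [margins_apply, Sum.elim_inl, Sum.elim_inr, sum_mul]
    rw [sum_comm (f := fun j i => B i j * v j), ← sum_add_distrib]
    refine Finset.sum_congr rfl fun i _ => ?_
    rw [← sum_add_distrib]
    refine Finset.sum_congr rfl fun j _ => ?_
    by_cases h : 0 ≤ u i + v j
    · simp only [B, h, ↓reduceIte, sup_of_le_left]; ring
    · simp [B, h, max_eq_right (not_le.1 h).le]
  have hfab : f (Sum.elim a b) = ∑ i, a i * u i + ∑ j, b j * v j := hf _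
  linarith [hlt _ ⟨B, hB, rfl⟩, sum_mul_add_sum_mul_le_of_cut hab hcut u v]

end Transport

section CutCondition

variable {ι κ : Type*} [Fintype ι] [Fintype κ]

theorem four_mul_sq_sum_le_of_sum_eq_zero {d : ι → ℝ} (hd : ∑ i, d i = 0) (S : Finset ι) :
    4 * (∑ i ∈ S, d i) ^ 2 ≤ Fintype.card ι * ∑ i, d i ^ 2 := by
  classical
  rcases S.eq_empty_or_nonempty with rfl | hS
  · rw [sum_empty, zero_pow two_ne_zero, mul_zero]
    positivity
  have hcS : ∑ i ∈ Sᶜ, d i = -∑ i ∈ S, d i := by linarith [sum_add_sum_compl S d]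
  have hS' := sq_sum_le_card_mul_sum_sq (s := S) (f := d)
  have hSc := sq_sum_le_card_mul_sum_sq (s := Sᶜ) (f := d)
  rw [hcS, neg_sq, card_compl, Nat.cast_sub (card_le_univ S)] at hSc
  have hsplit := sum_add_sum_compl S fun i => d i ^ 2
  have hk : (#S : ℝ) ≤ Fintype.card ι := by exact_mod_cast card_le_univ S
  have hc : (0 : ℝ) < Fintype.card ι := Nat.cast_pos.2 (hS.card_pos.trans_le (card_le_univ S))
  -- weighting the Cauchy–Schwarz bounds on `S` and `Sᶜ` by `#Sᶜ` and `#S`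
  have hmain : (Fintype.card ι : ℝ) * (∑ i ∈ S, d i) ^ 2 ≤
      #S * (Fintype.card ι - #S) * ∑ i, d i ^ 2 := by
    rw [← hsplit]
    nlinarith [mul_le_mul_of_nonneg_left hS' (sub_nonneg.2 hk),
      mul_le_mul_of_nonneg_left hSc (Nat.cast_nonneg (α := ℝ) #S)]
  have hamgm : 4 * (#S * (Fintype.card ι - #S) : ℝ) ≤ Fintype.card ι ^ 2 := by
    nlinarith [sq_nonneg ((Fintype.card ι : ℝ) - 2 * #S)]
  refine le_of_mul_le_mul_left ?_ hc
  nlinarith [sum_nonneg fun i (_ : i ∈ Finset.univ) => sq_nonneg (d i)]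

theorem four_mul_sq_sum_div_card_le_of_sum_eq_zero {d : ι → ℝ} (hd : ∑ i, d i = 0)
    (S : Finset ι) :
    4 * ((∑ i ∈ S, d i) / Fintype.card ι) ^ 2 ≤ 1 / Fintype.card ι * ∑ i, d i ^ 2 := by
  set c : ℝ := (Fintype.card ι : ℝ)
  rcases (Nat.cast_nonneg (α := ℝ) (Fintype.card ι)).eq_or_lt with hc | hc
  · simp [c, ← hc]
  calc 4 * ((∑ i ∈ S, d i) / c) ^ 2 = 4 * (∑ i ∈ S, d i) ^ 2 / c / c := by ring
    _ ≤ (c * ∑ i, d i ^ 2) / c / c := by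
        gcongr ?_ / c / c; exact four_mul_sq_sum_le_of_sum_eq_zero hd S
    _ = 1 / c * ∑ i, d i ^ 2 := by field_simp

theorem sum_rowSum_sub_sum_colSum_ge [Nonempty ι] [Nonempty κ] (A : Matrix ι κ ℝ)
    (S : Finset ι) (T : Finset κ) :
    matSize A * (#S / Fintype.card ι - #T / Fintype.card κ) - √(matDelta A / 2) ≤
      ∑ i ∈ S, ∑ j, A i j - ∑ j ∈ T, ∑ i, A i j := by
  set m : ℝ := (Fintype.card ι : ℝ)
  set n : ℝ := (Fintype.card κ : ℝ)
  have hm : 0 < m := Nat.cast_pos.2 Fintype.card_pos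
  have hn : 0 < n := Nat.cast_pos.2 Fintype.card_pos
  set d : ι → ℝ := fun i => matSize A - m * ∑ j, A i j
  set e : κ → ℝ := fun j => matSize A - n * ∑ i, A i j
  have hd : ∑ i, d i = 0 := by
    simp only [d, sum_sub_distrib, ← mul_sum, sum_const, card_univ, nsmul_eq_mul, matSize]; ring
  have he : ∑ j, e j = 0 := by
    simp only [e, sum_sub_distrib, ← mul_sum, sum_const, card_univ, nsmul_eq_mul, matSize,
      sum_comm (f := fun i j => A i j)]; ring
  have hΔ : matDelta A = 1 / m * ∑ i, d i ^ 2 + 1 / n * ∑ j, e j ^ 2 := rfl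
  have hS : ∑ i ∈ S, ∑ j, A i j = (#S * matSize A - ∑ i ∈ S, d i) / m := by
    simp only [d, sum_sub_distrib, ← mul_sum, sum_const, nsmul_eq_mul]; field_simp; ring
  have hT : ∑ j ∈ T, ∑ i, A i j = (#T * matSize A - ∑ j ∈ T, e j) / n := by
    simp only [e, sum_sub_distrib, ← mul_sum, sum_const, nsmul_eq_mul]; field_simp; ring
  have hα := four_mul_sq_sum_div_card_le_of_sum_eq_zero hd S
  have hβ := four_mul_sq_sum_div_card_le_of_sum_eq_zero he T
  set α := (∑ i ∈ S, d i) / m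
  set β := (∑ j ∈ T, e j) / n
  have hαβ : α - β ≤ √(matDelta A / 2) :=
    (le_abs_self _).trans (Real.abs_le_sqrt (by rw [hΔ]; nlinarith [sq_nonneg (α + β)]))
  rw [hS, hT]
  calc matSize A * (#S / m - #T / n) - √(matDelta A / 2)
      ≤ matSize A * (#S / m - #T / n) - (α - β) := by linarith
    _ = _ := by simp only [α, β]; field_simp; ring

theorem sum_rowSum_le_sum_add_sum_colSum_compl [DecidableEq κ] {A : Matrix ι κ ℝ}
    (hA : ∀ i j, 0 ≤ A i j) (S : Finset ι) (T : Finset κ) :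
    ∑ i ∈ S, ∑ j, A i j ≤ ∑ i ∈ S, ∑ j ∈ T, A i j + ∑ j ∈ Tᶜ, ∑ i, A i j :=
  calc ∑ i ∈ S, ∑ j, A i j = ∑ i ∈ S, ∑ j ∈ T, A i j + ∑ i ∈ S, ∑ j ∈ Tᶜ, A i j := by
        rw [← sum_add_distrib]; exact sum_congr rfl fun i _ => (sum_add_sum_compl T _).symm
    _ ≤ ∑ i ∈ S, ∑ j ∈ T, A i j + ∑ i, ∑ j ∈ Tᶜ, A i j := by
        gcongr
        · exact fun i _ _ => sum_nonneg fun j _ => hA i j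
        · exact subset_univ S
    _ = _ := by rw [sum_comm]

theorem cut_condition_of_le_matSize_sub [Nonempty ι] [Nonempty κ] [DecidableEq κ]
    {A : Matrix ι κ ℝ} (hA : ∀ i j, 0 ≤ A i j) {t : ℝ} (ht0 : 0 ≤ t)
    (ht : t ≤ matSize A - Fintype.card ι * Fintype.card κ * √(matDelta A / 2))
    (S : Finset ι) (T : Finset κ) :
    ∑ _i ∈ S, t / Fintype.card ι ≤ ∑ i ∈ S, ∑ j ∈ T, A i j + ∑ _j ∈ Tᶜ, t / Fintype.card κ := by
  set m : ℝ := (Fintype.card ι : ℝ)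
  set n : ℝ := (Fintype.card κ : ℝ)
  have hm : 0 < m := Nat.cast_pos.2 Fintype.card_pos
  have hn : 0 < n := Nat.cast_pos.2 Fintype.card_pos
  have hbox : 0 ≤ ∑ i ∈ S, ∑ j ∈ T, A i j := sum_nonneg fun i _ => sum_nonneg fun j _ => hA i j
  have hrows := sum_rowSum_le_sum_add_sum_colSum_compl hA S T
  have hdev := sum_rowSum_sub_sum_colSum_ge A S Tᶜ
  set k := (#S / m - #Tᶜ / n : ℝ)
  suffices h : t * k ≤ ∑ i ∈ S, ∑ j ∈ T, A i j by
    rw [sum_const, sum_const, nsmul_eq_mul, nsmul_eq_mul]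
    linarith [show #S * (t / m) - #Tᶜ * (t / n) = t * k by ring]
  rcases le_or_gt k 0 with hk | hk
  · exact (mul_nonpos_of_nonneg_of_nonpos ht0 hk).trans hbox
  have hk1 : 1 ≤ m * n * k := by
    have hz : m * n * k = ((#S * Fintype.card κ - #Tᶜ * Fintype.card ι : ℤ) : ℝ) := by
      simp only [k, m, n]; push_cast; field_simp
    have hpos : 0 < m * n * k := by positivity
    rw [hz] at hpos ⊢
    exact Int.cast_one_le_of_pos (Int.cast_pos.1 hpos)
  calc t * k ≤ (matSize A - m * n * √(matDelta A / 2)) * k := by gcongr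
    _ ≤ matSize A * k - √(matDelta A / 2) := by
        nlinarith [Real.sqrt_nonneg (matDelta A / 2)]
    _ ≤ _ := by linarith

end CutCondition

theorem Matrix.mulVec_nonneg {ι κ : Type*} [Fintype κ] {A : Matrix ι κ ℝ}
    (hA : ∀ i j, 0 ≤ A i j) {x : κ → ℝ} (hx : ∀ j, 0 ≤ x j) (i : ι) : 0 ≤ (A *ᵥ x) i :=
  sum_nonneg fun j _ => mul_nonneg (hA i j) (hx j)

section Capacity

variable {ι κ : Type*} [Fintype ι] [Fintype κ]

theorem le_matCap {A : Matrix ι κ ℝ} {c : ℝ}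
    (h : ∀ x : κ → ℝ, (∀ j, 0 < x j) → c ≤ Fintype.card ι * (∏ i, (A *ᵥ x) i) ^
      (1 / (Fintype.card ι : ℝ)) / (∏ j, x j) ^ (1 / (Fintype.card κ : ℝ))) :
    c ≤ matCap A :=
  le_csInf ⟨_, 1, fun _ => one_pos, rfl⟩ fun _ ⟨x, hx, hc⟩ => hc ▸ h x hx

theorem matCap_nonneg {A : Matrix ι κ ℝ} (hA : ∀ i j, 0 ≤ A i j) : 0 ≤ matCap A :=
  le_matCap fun x hx => by
    have := prod_nonneg fun i (_ : i ∈ Finset.univ) => mulVec_nonneg hA (fun j => (hx j).le) i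
    have := prod_pos fun j (_ : j ∈ Finset.univ) => hx j
    positivity

theorem Matrix.prod_rpow_sum_le_prod_mulVec {P : Matrix ι κ ℝ} (hP : ∀ i j, 0 ≤ P i j)
    (hrow : ∀ i, ∑ j, P i j = 1) {x : κ → ℝ} (hx : ∀ j, 0 < x j) :
    ∏ j, x j ^ (∑ i, P i j) ≤ ∏ i, (P *ᵥ x) i :=
  calc ∏ j, x j ^ (∑ i, P i j) = ∏ i, ∏ j, x j ^ P i j := by
        rw [prod_comm]; exact prod_congr rfl fun j _ => Real.rpow_sum_of_pos (hx j) _ _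
    _ ≤ ∏ i, (P *ᵥ x) i :=
        prod_le_prod (fun i _ => prod_nonneg fun j _ => Real.rpow_nonneg (hx j).le _)
          fun i _ => Real.geom_mean_le_arith_mean_weighted univ (P i) x (fun j _ => hP i j)
            (hrow i) fun j _ => (hx j).le

theorem pow_le_prod_mulVec_of_balanced [Nonempty ι] [Nonempty κ] {A B : Matrix ι κ ℝ}
    (hB : ∀ i j, 0 ≤ B i j ∧ B i j ≤ A i j) {t : ℝ} (ht : 0 < t)
    (hrow : ∀ i, ∑ j, B i j = t / Fintype.card ι)
    (hcol : ∀ j, ∑ i, B i j = t / Fintype.card κ) {x : κ → ℝ} (hx : ∀ j, 0 < x j) :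
    (t / Fintype.card ι * (∏ j, x j) ^ (1 / (Fintype.card κ : ℝ))) ^ Fintype.card ι ≤
      ∏ i, (A *ᵥ x) i := by
  set m : ℝ := (Fintype.card ι : ℝ)
  set n : ℝ := (Fintype.card κ : ℝ)
  have hm : 0 < m := Nat.cast_pos.2 Fintype.card_pos
  have hn : 0 < n := Nat.cast_pos.2 Fintype.card_pos
  set P : Matrix ι κ ℝ := (m / t) • B
  have hP : ∀ i j, 0 ≤ P i j := fun i j => mul_nonneg (by positivity) (hB i j).1
  have hProw : ∀ i, ∑ j, P i j = 1 := fun i => by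
    simp only [P, Matrix.smul_apply, smul_eq_mul, ← mul_sum, hrow]; field_simp
  have hPcol : ∀ j, ∑ i, P i j = m / n := fun j => by
    simp only [P, Matrix.smul_apply, smul_eq_mul, ← mul_sum, hcol]; field_simp
  have hPA : ∀ i, t / m * (P *ᵥ x) i ≤ (A *ᵥ x) i := fun i =>
    calc t / m * (P *ᵥ x) i = ∑ j, B i j * x j := by
          simp only [P, mulVec, dotProduct, Matrix.smul_apply, smul_eq_mul, mul_sum]
          exact sum_congr rfl fun j _ => by field_simp
      _ ≤ (A *ᵥ x) i := sum_le_sum fun j _ => mul_le_mul_of_nonneg_right (hB i j).2 (hx j).le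
  have hX : 0 < ∏ j, x j := prod_pos fun j _ => hx j
  have hXm : ((∏ j, x j) ^ (1 / n)) ^ Fintype.card ι = ∏ j, x j ^ (∑ i, P i j) := by
    rw [← Real.rpow_natCast, ← Real.rpow_mul hX.le,
      ← Real.finsetProd_rpow _ _ fun j _ => (hx j).le]
    simp only [hPcol]
    congr 2 with j
    rw [one_div_mul_eq_div]
  calc (t / m * (∏ j, x j) ^ (1 / n)) ^ Fintype.card ι
      = (t / m) ^ Fintype.card ι * ∏ j, x j ^ (∑ i, P i j) := by rw [mul_pow, hXm]
    _ ≤ (t / m) ^ Fintype.card ι * ∏ i, (P *ᵥ x) i := by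
        gcongr; exact prod_rpow_sum_le_prod_mulVec hP hProw hx
    _ = ∏ i, t / m * (P *ᵥ x) i := by rw [prod_mul_distrib, prod_const, card_univ]
    _ ≤ ∏ i, (A *ᵥ x) i := prod_le_prod
        (fun i _ => mul_nonneg (by positivity) (mulVec_nonneg hP (fun j => (hx j).le) i))
        fun i _ => hPA i

theorem le_matCap_of_balanced [Nonempty ι] [Nonempty κ] {A B : Matrix ι κ ℝ}
    (hB : ∀ i j, 0 ≤ B i j ∧ B i j ≤ A i j) {t : ℝ} (ht : 0 < t)
    (hrow : ∀ i, ∑ j, B i j = t / Fintype.card ι)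
    (hcol : ∀ j, ∑ i, B i j = t / Fintype.card κ) : t ≤ matCap A := by
  refine le_matCap fun x hx => ?_
  set m : ℝ := (Fintype.card ι : ℝ)
  have hm : 0 < m := Nat.cast_pos.2 Fintype.card_pos
  have hY : 0 < (∏ j, x j) ^ (1 / (Fintype.card κ : ℝ)) :=
    Real.rpow_pos_of_pos (prod_pos fun j _ => hx j) _
  have hA : ∀ i j, 0 ≤ A i j := fun i j => (hB i j).1.trans (hB i j).2
  have hroot : t / m * (∏ j, x j) ^ (1 / (Fintype.card κ : ℝ)) ≤ (∏ i, (A *ᵥ x) i) ^ (1 / m) := by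
    rw [one_div m, Real.le_rpow_inv_iff_of_pos (by positivity)
      (prod_nonneg fun i _ => mulVec_nonneg hA (fun j => (hx j).le) i) hm, Real.rpow_natCast]
    exact pow_le_prod_mulVec_of_balanced hB ht hrow hcol hx
  rw [le_div_iff₀ hY]
  calc t * (∏ j, x j) ^ (1 / (Fintype.card κ : ℝ))
      = m * (t / m * (∏ j, x j) ^ (1 / (Fintype.card κ : ℝ))) := by field_simp
    _ ≤ _ := by gcongr

end Capacity

/-- Capacity lower bound for rectangular nonnegative matrices:
`cap(A) ≥ s - mn √(Δ(A)/2)`. -/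
theorem matCap_ge_rect {m n : ℕ} (hm : 0 < m) (hn : 0 < n)
    (A : Matrix (Fin m) (Fin n) ℝ) (hA : ∀ i j, 0 ≤ A i j) :
    matSize A - (m : ℝ) * (n : ℝ) * Real.sqrt (matDelta A / 2) ≤ matCap A := by
  have : Nonempty (Fin m) := Fin.pos_iff_nonempty.1 hm
  have : Nonempty (Fin n) := Fin.pos_iff_nonempty.1 hn
  set t := matSize A - (m : ℝ) * (n : ℝ) * Real.sqrt (matDelta A / 2)
  rcases le_or_gt t 0 with ht | ht
  · exact ht.trans (matCap_nonneg hA)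
  have hcut := cut_condition_of_le_matSize_sub hA ht.le (by simp [t])
  have hmass : ∑ _i : Fin m, t / Fintype.card (Fin m) = ∑ _j : Fin n, t / Fintype.card (Fin n) := by
    simp only [sum_const, card_univ, nsmul_eq_mul]; field_simp
  obtain ⟨B, hB, hrow, hcol⟩ := exists_transport_of_cut hA hmass hcut
  exact le_matCap_of_balanced hB ht hrow hcol
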